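/- arXiv:math/0112153 — 2 statements merged into one kernel-verified Lean document; each statement's English description precedes it below -/
import Mathlib

section
/- Suppose $\omega = (\omega_i)_{i \geq 1}$ is a sequence in $\Gamma$ such that $K\omega_1 = 0$ for some smallest positive integer $K$, and there is no sequence of words $\mu_1, \mu_2, \ldots$ in $\mathcal{W}_\infty$, each $\mu_k$ nonempty with first letter $\neq 1$, such that $\lim_{k\to\infty} \omega_{\mu_k} = 0$. Let $\overline{\mathrm{sg}}_1(\omega) = \overline{\mathrm{sg}}(\omega) \setminus \{0, \omega_1, \ldots, (K-1)\omega_1\}$. Then $\overline{\mathrm{sg}}_1(\omega) = \overline{\bigcup_{i=2}^\infty (\mathrm{sg}(\omega) + \omega_i)}$, and $\overline{\mathrm{sg}}_1(\omega)$ is an $\omega$-invariant set. -/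
open Set Filter Topology

variable {Γ : Type*}

/-- The translate `X + g` of a set. -/
def trSet [Add Γ] (X : Set Γ) (g : Γ) : Set Γ := (fun x => x + g) '' X

/-- `X` is ω-invariant: closed and `X + ω i ⊆ X` for all `i ≥ 1`. -/
def OmegaInv [Add Γ] [TopologicalSpace Γ] (ω : ℕ → Γ) (X : Set Γ) : Prop :=
  IsClosed X ∧ ∀ i, 1 ≤ i → trSet X (ω i) ⊆ X

/-- The set `H_X`. -/
def HX [Add Γ] [TopologicalSpace Γ] (ω : ℕ → Γ) (X : Set Γ) : Set Γ :=
  closure (X \ ⋃ i ≥ 1, trSet X (ω i)) ∪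
    ⋂ n ≥ 1, closure (⋃ i ≥ n, trSet X (ω i))

/-- An ω-invariant pair `(X, X^∞)`. -/
def OmegaInvPair [Add Γ] [TopologicalSpace Γ] (ω : ℕ → Γ) (X Xinf : Set Γ) : Prop :=
  OmegaInv ω X ∧ IsClosed Xinf ∧ HX ω X ⊆ Xinf ∧ Xinf ⊆ X

/-- The set `X^{(n)} = X^∞ ∪ ⋃_{i ≥ n+1} (X + ω_i)`. -/
def Xn [Add Γ] [TopologicalSpace Γ] (ω : ℕ → Γ) (X Xinf : Set Γ) (n : ℕ) : Set Γ :=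
  Xinf ∪ ⋃ i ≥ n + 1, trSet X (ω i)

/-- A word: a finite list of positive integers. -/
def IsWord (μ : List ℕ) : Prop := ∀ i ∈ μ, 1 ≤ i

/-- A word with letters in `{1, …, n}`. -/
def IsWordLe (n : ℕ) (μ : List ℕ) : Prop := ∀ i ∈ μ, 1 ≤ i ∧ i ≤ n

/-- `ω_μ`, the sum of `ω i` over the letters of `μ`. -/
def wsum [AddCommMonoid Γ] (ω : ℕ → Γ) (μ : List ℕ) : Γ := (μ.map ω).sum

/-- The semigroup (with 0) generated by the `ω_i`. -/
def sgSet [AddCommMonoid Γ] (ω : ℕ → Γ) : Set Γ :=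
  {γ | ∃ μ : List ℕ, IsWord μ ∧ γ = wsum ω μ}

/-- Primeness condition for an ω-invariant set. -/
def PrimeCond [Add Γ] [TopologicalSpace Γ] (ω : ℕ → Γ) (X : Set Γ) : Prop :=
  ∀ X1 X2 : Set Γ, OmegaInv ω X1 → OmegaInv ω X2 → X ⊆ X1 ∪ X2 → X ⊆ X1 ∨ X ⊆ X2

/-- Primeness condition for an ω-invariant pair (componentwise inclusion/union). -/
def PrimePair [Add Γ] [TopologicalSpace Γ] (ω : ℕ → Γ) (X Xinf : Set Γ) : Prop :=
  ∀ X1 X1i X2 X2i : Set Γ, OmegaInvPair ω X1 X1i → OmegaInvPair ω X2 X2i →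
    X ⊆ X1 ∪ X2 → Xinf ⊆ X1i ∪ X2i →
    (X ⊆ X1 ∧ Xinf ⊆ X1i) ∨ (X ⊆ X2 ∧ Xinf ⊆ X2i)


section Aux

variable [AddCommMonoid Γ]

lemma wsum_cons (ω : ℕ → Γ) (i : ℕ) (μ : List ℕ) :
    wsum ω (i :: μ) = ω i + wsum ω μ := by simp [wsum]

lemma wsum_append (ω : ℕ → Γ) (μ ν : List ℕ) :
    wsum ω (μ ++ ν) = wsum ω μ + wsum ω ν := by simp [wsum]

lemma wsum_replicate (ω : ℕ → Γ) (m i : ℕ) :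
    wsum ω (List.replicate m i) = m • ω i := by
  simp [wsum, List.map_replicate]

lemma wsum_perm (ω : ℕ → Γ) {μ ν : List ℕ} (h : μ.Perm ν) :
    wsum ω μ = wsum ω ν := (h.map ω).sum_eq

lemma sg_add (ω : ℕ → Γ) {s : Γ} (hs : s ∈ sgSet ω) {i : ℕ} (hi : 1 ≤ i) :
    s + ω i ∈ sgSet ω := by
  obtain ⟨μ, hμ, rfl⟩ := hs
  refine ⟨μ ++ [i], ?_, by simp [wsum_append, wsum]⟩
  intro j hj
  rcases List.mem_append.1 hj with h | h
  · exact hμ j h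
  · simp at h; omega

end Aux

theorem stmt10 [AddCommGroup Γ] [TopologicalSpace Γ] [IsTopologicalAddGroup Γ]
    [LocallyCompactSpace Γ] [SecondCountableTopology Γ] [T2Space Γ]
    (ω : ℕ → Γ) (K : ℕ) (hK : 1 ≤ K) (hK0 : K • ω 1 = 0)
    (hmin : ∀ m : ℕ, 1 ≤ m → m • ω 1 = 0 → K ≤ m)
    (hnoseq : ¬ ∃ μ : ℕ → List ℕ,
      (∀ k, IsWord (μ k) ∧ μ k ≠ [] ∧ (μ k).head? ≠ some 1) ∧
        Tendsto (fun k => wsum ω (μ k)) atTop (𝓝 0)) :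
    closure (sgSet ω) \ {γ | ∃ m < K, γ = m • ω 1} =
        closure (⋃ i ≥ 2, trSet (sgSet ω) (ω i)) ∧
      OmegaInv ω (closure (sgSet ω) \ {γ | ∃ m < K, γ = m • ω 1}) := by
  set S := sgSet ω with hS
  set T := ⋃ i ≥ 2, trSet S (ω i) with hTdef
  set F := {γ : Γ | ∃ m < K, γ = m • ω 1} with hFdef
  -- reduction of multiples of ω 1 modulo K
  have hmod : ∀ m : ℕ, m • ω 1 = (m % K) • ω 1 := by
    intro m
    conv_lhs => rw [← Nat.mod_add_div m K]
    rw [add_smul, mul_comm K, mul_smul, hK0, smul_zero, add_zero]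
  -- F is finite, closed
  have hFfin : F.Finite := by
    have : F ⊆ (fun m : ℕ => m • ω 1) '' (Set.Iio K) := by
      rintro γ ⟨m, hm, rfl⟩; exact ⟨m, hm, rfl⟩
    exact ((Set.finite_Iio K).image _).subset this
  have hFclosed : IsClosed F := hFfin.isClosed
  -- T ⊆ S
  have hTS : T ⊆ S := by
    rintro x hx
    simp only [hTdef, Set.mem_iUnion] at hx
    obtain ⟨i, hi, s, hs, rfl⟩ := hx
    exact sg_add ω hs (by omega)
  -- F ⊆ S
  have hFS : F ⊆ S := by
    rintro γ ⟨m, hm, rfl⟩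
    exact ⟨List.replicate m 1, fun j hj => by simp at hj; omega,
      (wsum_replicate ω m 1).symm⟩
  -- S ⊆ T ∪ F
  have hSTF : S ⊆ T ∪ F := by
    rintro γ ⟨μ, hμ, rfl⟩
    by_cases hall : ∀ j ∈ μ, j = 1
    · right
      have : μ = List.replicate μ.length 1 := List.eq_replicate_of_mem hall
      rw [this, wsum_replicate, hmod]
      exact ⟨μ.length % K, Nat.mod_lt _ (by omega), rfl⟩
    · left
      push_neg at hall
      obtain ⟨j, hjμ, hj1⟩ := hall
      have hj2 : 2 ≤ j := by have := hμ j hjμ; omega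
      have hperm : μ.Perm (j :: μ.erase j) := List.perm_cons_erase hjμ
      have hw : wsum ω μ = wsum ω (μ.erase j) + ω j := by
        rw [wsum_perm ω hperm, wsum_cons, add_comm]
      simp only [hTdef, Set.mem_iUnion]
      refine ⟨j, hj2, wsum ω (μ.erase j), ⟨μ.erase j, ?_, rfl⟩, hw.symm⟩
      exact fun i hi => hμ i (List.mem_of_mem_erase hi)
  -- key: no multiple of ω 1 lies in closure T
  have hFnotT : ∀ m : ℕ, m • ω 1 ∉ closure T := by
    intro m hm
    rw [mem_closure_iff_seq_limit] at hm
    obtain ⟨u, hu, hulim⟩ := hm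
    set r := m * (K - 1) with hr
    have hrm : r • ω 1 + m • ω 1 = 0 := by
      rw [← add_smul]
      have : r + m = m * K := by rw [hr, ← Nat.mul_succ]; congr 1; omega
      rw [this, mul_smul, hK0, smul_zero]
    have hch : ∀ k, ∃ ν : List ℕ, IsWord ν ∧ ν ≠ [] ∧ ν.head? ≠ some 1 ∧
        wsum ω ν = u k + r • ω 1 := by
      intro k
      have := hu k
      simp only [hTdef, Set.mem_iUnion] at this
      obtain ⟨i, hi, s, hsS, hus⟩ := this
      obtain ⟨μ, hμ, rfl⟩ := hsS
      refine ⟨i :: (μ ++ List.replicate r 1), ?_, by simp, ?_, ?_⟩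
      · intro j hj
        rcases List.mem_cons.1 hj with rfl | hj
        · omega
        · rcases List.mem_append.1 hj with h | h
          · exact hμ j h
          · simp at h; omega
      · simp; omega
      · rw [wsum_cons, wsum_append, wsum_replicate, ← hus]
        beta_reduce
        abel
    choose ν hν1 hν2 hν3 hν4 using hch
    apply hnoseq
    refine ⟨ν, fun k => ⟨hν1 k, hν2 k, hν3 k⟩, ?_⟩
    have : Tendsto (fun k => u k + r • ω 1) atTop (𝓝 (m • ω 1 + r • ω 1)) :=
      hulim.add_const _
    rw [add_comm (m • ω 1)] at this
    rw [hrm] at this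
    exact this.congr fun k => (hν4 k).symm
  -- closure S = closure T ∪ F
  have hclos : closure S = closure T ∪ F := by
    apply Set.Subset.antisymm
    · have h1 : closure S ⊆ closure (T ∪ F) := closure_mono hSTF
      rwa [closure_union, hFclosed.closure_eq] at h1
    · exact Set.union_subset (closure_mono hTS)
        (hFS.trans subset_closure)
  -- the main set equality
  have heq : closure S \ F = closure T := by
    apply Set.Subset.antisymm
    · rintro x ⟨hx, hxF⟩
      rw [hclos] at hx
      exact hx.resolve_right hxF
    · intro x hx
      refine ⟨hclos ▸ Set.mem_union_left _ hx, ?_⟩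
      rintro ⟨m, hm, rfl⟩
      exact hFnotT m hx
  refine ⟨heq, ?_⟩
  rw [heq]
  refine ⟨isClosed_closure, ?_⟩
  intro i hi
  -- T + ω i ⊆ T
  have hTi : trSet T (ω i) ⊆ T := by
    rintro x ⟨t, ht, rfl⟩
    simp only [hTdef, Set.mem_iUnion] at ht ⊢
    obtain ⟨j, hj, s, hsS, rfl⟩ := ht
    exact ⟨j, hj, s + ω i, sg_add ω hsS hi, by beta_reduce; abel⟩
  -- closure + translation
  rintro x ⟨t, ht, rfl⟩
  have hcont : Continuous fun y : Γ => y + ω i := continuous_add_right _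
  have : (fun y : Γ => y + ω i) '' closure T ⊆ closure ((fun y : Γ => y + ω i) '' T) :=
    image_closure_subset_closure_image hcont
  have hx : t + ω i ∈ closure ((fun y : Γ => y + ω i) '' T) := this ⟨t, ht, rfl⟩
  exact closure_mono hTi hx
end

section
/- Let $X \in \varDelta$, i.e., $X$ is a prime $\omega$-invariant set not of the form $\gamma' + \overline{\mathrm{sg}}(\omega)$ for any $\gamma' \in \Gamma$, in the setting where $K\omega_1 = 0$ ($K$ minimal positive). Then for any $\gamma \in X$, there exist a sequence of nonempty words $\mu_1, \mu_2, \ldots$ each with first letter $\neq 1$, and a sequence $\gamma_1, \gamma_2, \ldots$ in $X$, such that $\gamma = \lim_{k\to\infty} (\gamma_k + \omega_{\mu_k})$. -/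
open Set Filter Topology

variable {Γ : Type*}

/-!
Let `Y` be the closure of `⋃_{i ≥ 2} (X + ω_i)`; it is enough to show `X ⊆ Y`. Off `Y` only the
letter `1` acts, and it permutes the cosets of the finite group `H = ⟨ω_1⟩`. If `γ₁ ∈ X \ Y`,
splitting `X` along a saturated neighbourhood `V + H` of `γ₁` and applying primeness puts every
point of `X \ Y` in `closure (V + H)`; shrinking `V` (regularity) gives `X \ Y ⊆ γ₁ + H`. Then
`X ⊆ closure (γ₁ + sg(ω)) ∪ Y`, and primeness once more forces `X = γ₁ + closure (sg(ω))`.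
-/

open Pointwise

section Words

variable [AddCommMonoid Γ] {ω : ℕ → Γ}

lemma zero_mem_sgSet : (0 : Γ) ∈ sgSet ω := ⟨[], by simp [IsWord], by simp [wsum]⟩

lemma add_mem_sgSet {s : Γ} (hs : s ∈ sgSet ω) {i : ℕ} (hi : 1 ≤ i) : s + ω i ∈ sgSet ω := by
  obtain ⟨μ, hμ, rfl⟩ := hs
  refine ⟨i :: μ, ?_, by simp [wsum, add_comm]⟩
  simpa [IsWord, hi] using hμ

lemma nsmul_mem_sgSet (n : ℕ) : n • ω 1 ∈ sgSet ω := by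
  induction n with
  | zero => simpa using zero_mem_sgSet
  | succ n ih => simpa [succ_nsmul] using add_mem_sgSet ih le_rfl

variable [TopologicalSpace Γ] {X : Set Γ}

lemma OmegaInv.add_wsum_mem (hX : OmegaInv ω X) {μ : List ℕ} (hμ : IsWord μ) {x : Γ}
    (hx : x ∈ X) : x + wsum ω μ ∈ X := by
  induction μ generalizing x with
  | nil => simpa [wsum] using hx
  | cons i μ ih =>
    have hxi : x + ω i ∈ X := hX.2 i (hμ i (List.mem_cons_self ..)) ⟨x, hx, rfl⟩
    have := ih (fun j hj => hμ j (List.mem_cons_of_mem _ hj)) hxi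
    simpa [wsum, add_assoc] using this

variable [ContinuousAdd Γ]

lemma omegaInv_closure {S : Set Γ} (hS : ∀ i, 1 ≤ i → ∀ x ∈ S, x + ω i ∈ S) :
    OmegaInv ω (closure S) := by
  refine ⟨isClosed_closure, fun i hi => ?_⟩
  refine (image_closure_subset_closure_image (continuous_add_const (ω i))).trans ?_
  exact closure_mono (image_subset_iff.2 fun x hx => hS i hi x hx)

lemma omegaInv_closure_image_sgSet (γ : Γ) : OmegaInv ω (closure ((γ + ·) '' sgSet ω)) := by
  refine omegaInv_closure fun i hi => ?_
  rintro _ ⟨s, hs, rfl⟩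
  exact ⟨s + ω i, add_mem_sgSet hs hi, (add_assoc γ s (ω i)).symm⟩

end Words

def higherShifts [Add Γ] (ω : ℕ → Γ) (X : Set Γ) : Set Γ := ⋃ i ≥ 2, trSet X (ω i)

lemma mem_higherShifts [Add Γ] {ω : ℕ → Γ} {X : Set Γ} {x : Γ} :
    x ∈ higherShifts ω X ↔ ∃ i ≥ 2, ∃ y ∈ X, y + ω i = x := by
  simp only [higherShifts, trSet, mem_iUnion, mem_image, exists_prop]

lemma add_mem_add_zmultiples_iff [AddCommGroup Γ] {V : Set Γ} {g x : Γ} :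
    x + g ∈ V + (AddSubgroup.zmultiples g : Set Γ) ↔
      x ∈ V + (AddSubgroup.zmultiples g : Set Γ) := by
  constructor
  · rintro ⟨v, hv, h, hh, hvh⟩
    exact ⟨v, hv, h - g, sub_mem hh (AddSubgroup.mem_zmultiples g), show v + (h - g) = x by
      rw [← add_sub_assoc, show v + h = x + g from hvh, add_sub_cancel_right]⟩
  · rintro ⟨v, hv, h, hh, rfl⟩
    exact ⟨v, hv, h + g, add_mem hh (AddSubgroup.mem_zmultiples g), (add_assoc v h g).symm⟩

section Primeness

variable [AddCommGroup Γ] [TopologicalSpace Γ] [IsTopologicalAddGroup Γ] {ω : ℕ → Γ}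
  {X : Set Γ}

lemma omegaInv_closure_higherShifts_union (hX : OmegaInv ω X) {S : Set Γ} (hSX : S ⊆ X)
    (hS : ∀ x ∈ S, x + ω 1 ∈ S) : OmegaInv ω (closure (higherShifts ω X ∪ S)) := by
  refine omegaInv_closure fun i hi x hx => ?_
  rcases hx with hx | hx
  · obtain ⟨j, hj, y, hy, rfl⟩ := mem_higherShifts.1 hx
    exact Or.inl (mem_biUnion hj ⟨y + ω i, hX.2 i hi ⟨y, hy, rfl⟩, add_right_comm _ _ _⟩)
  · rcases eq_or_lt_of_le hi with rfl | hi
    · exact Or.inr (hS x hx)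
    · exact Or.inl (mem_biUnion hi ⟨x, hSX hx, rfl⟩)

lemma mem_closure_add_zmultiples (hX : OmegaInv ω X) (hprime : PrimeCond ω X) {γ₁ γ₂ : Γ}
    (hγ₁ : γ₁ ∈ X) (hγ₁Y : γ₁ ∉ closure (higherShifts ω X)) (hγ₂ : γ₂ ∈ X)
    (hγ₂Y : γ₂ ∉ closure (higherShifts ω X)) {V : Set Γ} (hV : IsOpen V) (hγ₁V : γ₁ ∈ V) :
    γ₂ ∈ closure (V + (AddSubgroup.zmultiples (ω 1) : Set Γ)) := by
  set U := V + (AddSubgroup.zmultiples (ω 1) : Set Γ)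
  have hγ₁U : γ₁ ∈ U := ⟨γ₁, hγ₁V, 0, zero_mem _, add_zero γ₁⟩
  have hin : OmegaInv ω (closure (higherShifts ω X ∪ (X ∩ U))) :=
    omegaInv_closure_higherShifts_union hX inter_subset_left fun x hx =>
      ⟨hX.2 1 le_rfl ⟨x, hx.1, rfl⟩, add_mem_add_zmultiples_iff.2 hx.2⟩
  have hout : OmegaInv ω (closure (higherShifts ω X ∪ (X \ U))) :=
    omegaInv_closure_higherShifts_union hX sdiff_subset fun x hx =>
      ⟨hX.2 1 le_rfl ⟨x, hx.1, rfl⟩, fun h => hx.2 (add_mem_add_zmultiples_iff.1 h)⟩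
  have hcover :
      X ⊆ closure (higherShifts ω X ∪ (X ∩ U)) ∪ closure (higherShifts ω X ∪ (X \ U)) := by
    intro x hx
    by_cases hxU : x ∈ U
    · exact Or.inl (subset_closure (Or.inr ⟨hx, hxU⟩))
    · exact Or.inr (subset_closure (Or.inr ⟨hx, hxU⟩))
  rcases hprime _ _ hin hout hcover with h | h
  · have h₂ := h hγ₂
    rw [closure_union] at h₂
    rcases h₂ with h₂ | h₂
    · exact absurd h₂ hγ₂Y
    · exact closure_mono inter_subset_right h₂
  · rw [closure_union, (hX.1.sdiff hV.add_right).closure_eq] at h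
    rcases h hγ₁ with h₁ | h₁
    · exact absurd h₁ hγ₁Y
    · exact absurd hγ₁U h₁.2

lemma sub_mem_of_forall_mem_closure_add [T2Space Γ] {H : AddSubgroup Γ}
    (hH : IsCompact (H : Set Γ)) {x y : Γ}
    (h : ∀ V : Set Γ, IsOpen V → x ∈ V → y ∈ closure (V + (H : Set Γ))) : y - x ∈ H := by
  by_contra hyx
  have hs : {c | y - c ∉ H} ∈ 𝓝 x :=
    (hH.isClosed.preimage (continuous_const.sub continuous_id)).isOpen_compl.mem_nhds hyx
  obtain ⟨C, hC, hCclosed, hCs⟩ := exists_mem_nhds_isClosed_subset hs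
  have hy := h (interior C) isOpen_interior (mem_interior_iff_mem_nhds.2 hC)
  obtain ⟨c, hc, z, hz, rfl⟩ := closure_minimal (add_subset_add_right interior_subset)
    (hCclosed.add_right_of_isCompact hH) hy
  exact hCs hc (by simpa using hz)

lemma eq_image_closure_sgSet (hX : OmegaInv ω X) {γ : Γ} (hγ : γ ∈ X)
    (hsub : X ⊆ closure ((γ + ·) '' sgSet ω)) : X = (γ + ·) '' closure (sgSet ω) := by
  have himage : (γ + ·) '' closure (sgSet ω) = closure ((γ + ·) '' sgSet ω) :=
    (Homeomorph.addLeft γ).image_closure (sgSet ω)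
  rw [himage]
  refine hsub.antisymm (closure_minimal ?_ hX.1)
  rintro _ ⟨s, ⟨μ, hμ, rfl⟩, rfl⟩
  exact hX.add_wsum_mem hμ hγ

lemma subset_closure_higherShifts [T2Space Γ] (hX : OmegaInv ω X) (hprime : PrimeCond ω X)
    (hω : IsOfFinAddOrder (ω 1))
    (hnot : ¬ ∃ γ' : Γ, X = (fun s => γ' + s) '' closure (sgSet ω)) :
    X ⊆ closure (higherShifts ω X) := by
  intro γ₁ hγ₁
  by_contra hγ₁Y
  have hY : OmegaInv ω (closure (higherShifts ω X)) := by
    simpa using omegaInv_closure_higherShifts_union hX (empty_subset X) (fun _ h => h.elim)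
  have hcover : X ⊆ closure ((γ₁ + ·) '' sgSet ω) ∪ closure (higherShifts ω X) := by
    intro γ₂ hγ₂
    by_cases hγ₂Y : γ₂ ∈ closure (higherShifts ω X)
    · exact Or.inr hγ₂Y
    have hsub : γ₂ - γ₁ ∈ AddSubgroup.zmultiples (ω 1) :=
      sub_mem_of_forall_mem_closure_add (finite_zmultiples.2 hω).isCompact
        fun V hV hγ₁V => mem_closure_add_zmultiples hX hprime hγ₁ hγ₁Y hγ₂ hγ₂Y hV hγ₁V
    obtain ⟨n, hn⟩ := hω.mem_multiples_iff_mem_zmultiples.2 hsub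
    exact Or.inl (subset_closure ⟨n • ω 1, nsmul_mem_sgSet n, by simp [hn]⟩)
  rcases hprime _ _ (omegaInv_closure_image_sgSet γ₁) hY hcover with h | h
  · exact hnot ⟨γ₁, eq_image_closure_sgSet hX hγ₁ h⟩
  · exact hγ₁Y (h hγ₁)

end Primeness

theorem stmt14_general [AddCommGroup Γ] [TopologicalSpace Γ] [IsTopologicalAddGroup Γ]
    [SecondCountableTopology Γ] [T2Space Γ]
    (ω : ℕ → Γ) (K : ℕ) (hK : 1 ≤ K) (hK0 : K • ω 1 = 0)
    (X : Set Γ) (hX : OmegaInv ω X) (hprime : PrimeCond ω X)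
    (hnot : ¬ ∃ γ' : Γ, X = (fun s => γ' + s) '' closure (sgSet ω)) :
    ∀ γ ∈ X, ∃ (μ : ℕ → List ℕ) (g : ℕ → Γ),
      (∀ k, IsWord (μ k) ∧ μ k ≠ [] ∧ (μ k).head? ≠ some 1 ∧ g k ∈ X) ∧
        Tendsto (fun k => g k + wsum ω (μ k)) atTop (𝓝 γ) := by
  intro γ hγ
  have hω : IsOfFinAddOrder (ω 1) := isOfFinAddOrder_iff_nsmul_eq_zero.2 ⟨K, hK, hK0⟩
  obtain ⟨x, hxY, hx⟩ :=
    mem_closure_iff_seq_limit.1 (subset_closure_higherShifts hX hprime hω hnot hγ)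
  have hshift : ∀ k, ∃ i ≥ 2, ∃ g ∈ X, g + ω i = x k := fun k =>
    mem_higherShifts.1 (hxY k)
  choose i hi g hg hgx using hshift
  refine ⟨fun k => [i k], g, fun k => ⟨?_, List.cons_ne_nil _ _, ?_, hg k⟩, ?_⟩
  · intro j hj
    rw [List.mem_singleton.1 hj]
    exact one_le_two.trans (hi k)
  · simp only [List.head?_cons, ne_eq, Option.some.injEq]
    have := hi k
    omega
  · simpa [wsum, hgx] using hx

theorem stmt14 [AddCommGroup Γ] [TopologicalSpace Γ] [IsTopologicalAddGroup Γ]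
    [LocallyCompactSpace Γ] [SecondCountableTopology Γ] [T2Space Γ]
    (ω : ℕ → Γ) (K : ℕ) (hK : 1 ≤ K) (hK0 : K • ω 1 = 0)
    (hmin : ∀ m : ℕ, 1 ≤ m → m • ω 1 = 0 → K ≤ m)
    (X : Set Γ) (hX : OmegaInv ω X) (hprime : PrimeCond ω X)
    (hnot : ¬ ∃ γ' : Γ, X = (fun s => γ' + s) '' closure (sgSet ω)) :
    ∀ γ ∈ X, ∃ (μ : ℕ → List ℕ) (g : ℕ → Γ),
      (∀ k, IsWord (μ k) ∧ μ k ≠ [] ∧ (μ k).head? ≠ some 1 ∧ g k ∈ X) ∧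
        Tendsto (fun k => g k + wsum ω (μ k)) atTop (𝓝 γ) :=
  stmt14_general ω K hK hK0 X hX hprime hnot
end
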